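/- arXiv:2206.00754 — 2 statements merged into one kernel-verified Lean document; each statement's English description precedes it below -/
import Mathlib

section
/- Let (x_m) and (y_m) be sequences of non-negative integers with x_m < y_m for all m and y_m → ∞, and let (e_m), (g_m) be sequences of non-negative reals with R_m = Σ_{v = x_m+1}^{y_m} e_v · g_{y_m − v} > 0 for all m. Let (Y_n) and (Z_n) be sequences of random variables on the same probability space and y, z ∈ ℝ constants. If (Y_n) is deferred Nörlund statistically convergent in probability to the constant y and (Z_n) is deferred Nörlund statistically convergent in probability to the constant z, then the sequence (Y_n · Z_n) is deferred Nörlund statistically convergent in probability to y·z. -/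
/-!
Multiplication is continuous at `(c, d)`, so there is an `η > 0` such that
`|Y n ω * Z n ω - c * d| ≥ ε` forces `|Y n ω - c| ≥ η` or `|Z n ω - d| ≥ η`. Hence the
weighted probability of the first event is at least `δ` only if one of the weighted probabilities
of the other two is at least `δ / 2`, and the family of index sets with deferred Nörlund density
zero is closed under subsets and finite unions.
-/

open MeasureTheory Filter

/-- The deferred Nörlund normalizing sum `R_m = ∑_{v=x_m+1}^{y_m} e_v g_{y_m - v}`. -/
noncomputable def Rm (x y : ℕ → ℕ) (e g : ℕ → ℝ) (m : ℕ) : ℝ :=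
  ∑ v ∈ Finset.Ioc (x m) (y m), e v * g (y m - v)

/-- The family of sets `{n : n ≤ R_m and A m n}` has deferred Nörlund density zero. -/
def DNZero (x y : ℕ → ℕ) (e g : ℕ → ℝ) (A : ℕ → ℕ → Prop) : Prop :=
  Tendsto
    (fun m => (Nat.card {n : ℕ | (n : ℝ) ≤ Rm x y e g m ∧ A m n} : ℝ) / Rm x y e g m)
    atTop (nhds 0)

/-- Deferred Nörlund statistical convergence in probability of `(Y n)` to `Z`. -/
def StDNP {Ω : Type*} [MeasurableSpace Ω] (μ : Measure Ω)
    (x y : ℕ → ℕ) (e g : ℕ → ℝ) (Y : ℕ → Ω → ℝ) (Z : Ω → ℝ) : Prop :=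
  ∀ ε > (0 : ℝ), ∀ δ > (0 : ℝ),
    DNZero x y e g
      (fun m n => δ ≤ e (y m - n) * g n * (μ {ω | ε ≤ |Y n ω - Z ω|}).toReal)

section Density

variable {r : ℝ} {A B : ℕ → Prop}

theorem finite_setOf_natCast_le_and (r : ℝ) (A : ℕ → Prop) :
    {n : ℕ | (n : ℝ) ≤ r ∧ A n}.Finite :=
  (Set.finite_Iic ⌊r⌋₊).subset fun _ hn => Nat.le_floor hn.1

theorem setOf_natCast_le_and_eq_empty (hr : r < 0) : {n : ℕ | (n : ℝ) ≤ r ∧ A n} = ∅ :=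
  Set.eq_empty_of_forall_notMem fun n hn => (hn.1.trans_lt hr).not_ge n.cast_nonneg

theorem card_setOf_natCast_le_and_div_nonneg (r : ℝ) (A : ℕ → Prop) :
    0 ≤ (Nat.card {n : ℕ | (n : ℝ) ≤ r ∧ A n} : ℝ) / r := by
  rcases lt_or_ge r 0 with hr | hr
  · simp [setOf_natCast_le_and_eq_empty hr]
  · positivity

theorem card_setOf_natCast_le_and_div_mono (h : ∀ n, A n → B n) :
    (Nat.card {n : ℕ | (n : ℝ) ≤ r ∧ A n} : ℝ) / r ≤
      (Nat.card {n : ℕ | (n : ℝ) ≤ r ∧ B n} : ℝ) / r := by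
  rcases lt_or_ge r 0 with hr | hr
  · simp [setOf_natCast_le_and_eq_empty hr]
  · gcongr
    exact Nat.card_mono (finite_setOf_natCast_le_and r B) fun n hn => ⟨hn.1, h n hn.2⟩

theorem card_setOf_natCast_le_and_or_div_le :
    (Nat.card {n : ℕ | (n : ℝ) ≤ r ∧ (A n ∨ B n)} : ℝ) / r ≤
      (Nat.card {n : ℕ | (n : ℝ) ≤ r ∧ A n} : ℝ) / r +
        (Nat.card {n : ℕ | (n : ℝ) ≤ r ∧ B n} : ℝ) / r := by
  rcases lt_or_ge r 0 with hr | hr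
  · simp [setOf_natCast_le_and_eq_empty hr]
  · rw [← add_div]
    gcongr
    have hunion : {n : ℕ | (n : ℝ) ≤ r ∧ (A n ∨ B n)} =
        {n : ℕ | (n : ℝ) ≤ r ∧ A n} ∪ {n : ℕ | (n : ℝ) ≤ r ∧ B n} := by
      ext n
      simp only [Set.mem_ofPred_eq, Set.mem_union, and_or_left]
    simp only [Nat.card_coe_set_eq, hunion]
    exact_mod_cast Set.ncard_union_le _ _

end Density

namespace DNZero

variable {x y : ℕ → ℕ} {e g : ℕ → ℝ} {A B : ℕ → ℕ → Prop}

theorem mono (h : ∀ m n, A m n → B m n) (hB : DNZero x y e g B) : DNZero x y e g A :=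
  squeeze_zero (fun _ => card_setOf_natCast_le_and_div_nonneg _ _)
    (fun m => card_setOf_natCast_le_and_div_mono (h m)) hB

theorem or (hA : DNZero x y e g A) (hB : DNZero x y e g B) :
    DNZero x y e g (fun m n => A m n ∨ B m n) :=
  squeeze_zero (fun _ => card_setOf_natCast_le_and_div_nonneg _ _)
    (fun _ => card_setOf_natCast_le_and_or_div_le) (by simpa using hA.add hB)

end DNZero

theorem exists_pos_forall_abs_mul_sub_mul_lt (c d : ℝ) {ε : ℝ} (hε : 0 < ε) :
    ∃ η > 0, ∀ a b : ℝ, |a - c| < η → |b - d| < η → |a * b - c * d| < ε := by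
  obtain ⟨η, hη, hmul⟩ :=
    Metric.continuousAt_iff.1 (continuous_mul.continuousAt (x := (c, d))) ε hε
  refine ⟨η, hη, fun a b ha hb => ?_⟩
  simpa [Prod.dist_eq, Real.dist_eq, ha, hb] using hmul (x := (a, b))

theorem measureReal_abs_mul_sub_mul_le {Ω : Type*} [MeasurableSpace Ω] (μ : Measure Ω)
    [IsFiniteMeasure μ] {U V : Ω → ℝ} {c d ε η : ℝ}
    (hη : ∀ a b : ℝ, |a - c| < η → |b - d| < η → |a * b - c * d| < ε) :
    μ.real {ω | ε ≤ |U ω * V ω - c * d|} ≤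
      μ.real {ω | η ≤ |U ω - c|} + μ.real {ω | η ≤ |V ω - d|} := by
  have hsub : {ω | ε ≤ |U ω * V ω - c * d|} ⊆ {ω | η ≤ |U ω - c|} ∪ {ω | η ≤ |V ω - d|} := by
    intro ω hω
    by_contra hnot
    simp only [Set.mem_union, Set.mem_ofPred_eq, not_or, not_le] at hω hnot
    exact (hη _ _ hnot.1 hnot.2).not_ge hω
  exact (measureReal_mono hsub).trans (measureReal_union_le _ _)

theorem half_le_mul_or_half_le_mul_of_le_mul {δ w p p₁ p₂ : ℝ} (hδ : 0 < δ) (hp : 0 ≤ p)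
    (h : δ ≤ w * p) (hle : p ≤ p₁ + p₂) : δ / 2 ≤ w * p₁ ∨ δ / 2 ≤ w * p₂ := by
  have hw : 0 < w := pos_of_mul_pos_left (hδ.trans_le h) hp
  by_contra! hlt
  nlinarith [mul_le_mul_of_nonneg_left hle hw.le]

theorem stmt_2_general {Ω : Type*} [MeasurableSpace Ω] (μ : Measure Ω) [IsProbabilityMeasure μ]
    (x y : ℕ → ℕ) (e g : ℕ → ℝ)
    (Y Z : ℕ → Ω → ℝ) (c d : ℝ)
    (hY : StDNP μ x y e g Y (fun _ => c))
    (hZ : StDNP μ x y e g Z (fun _ => d)) :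
    StDNP μ x y e g (fun n ω => Y n ω * Z n ω) (fun _ => c * d) := by
  intro ε hε δ hδ
  obtain ⟨η, hη, hmul⟩ := exists_pos_forall_abs_mul_sub_mul_lt c d hε
  refine DNZero.mono (fun m n hn => ?_) ((hY η hη (δ / 2) (half_pos hδ)).or
    (hZ η hη (δ / 2) (half_pos hδ)))
  exact half_le_mul_or_half_le_mul_of_le_mul hδ measureReal_nonneg hn
    (measureReal_abs_mul_sub_mul_le μ hmul)

/-- If `(Y n)` is St_DNP-convergent to the constant `c` and `(Z n)` is
St_DNP-convergent to the constant `d`, then `(Y n * Z n)` is St_DNP-convergent to `c * d`. -/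
theorem stmt_2 {Ω : Type*} [MeasurableSpace Ω] (μ : Measure Ω) [IsProbabilityMeasure μ]
    (x y : ℕ → ℕ) (e g : ℕ → ℝ)
    (hxy : ∀ m, x m < y m) (hy : Tendsto y atTop atTop)
    (he : ∀ m, 0 ≤ e m) (hg : ∀ m, 0 ≤ g m)
    (hR : ∀ m, 0 < Rm x y e g m)
    (Y Z : ℕ → Ω → ℝ) (c d : ℝ)
    (hYmeas : ∀ n, Measurable (Y n)) (hZmeas : ∀ n, Measurable (Z n))
    (hY : StDNP μ x y e g Y (fun _ => c))
    (hZ : StDNP μ x y e g Z (fun _ => d)) :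
    StDNP μ x y e g (fun n ω => Y n ω * Z n ω) (fun _ => c * d) :=
  stmt_2_general μ x y e g Y Z c d hY hZ
end

section
/- Let (x_m) and (y_m) be sequences of non-negative integers with x_m < y_m for all m and y_m → ∞, and let (e_m), (g_m) be sequences of non-negative reals with R_m = Σ_{v = x_m+1}^{y_m} e_v · g_{y_m − v} > 0 for all m. Let r ≥ 1 and let (Y_n) be a sequence of random variables and Y a random variable on the same probability space with E(|Y_n − Y|^r) finite for all n. If (Y_n) is deferred Nörlund statistically r-th mean convergent to Y, then (Y_n) is deferred Nörlund statistically convergent in probability to Y. -/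
/-!
By Markov's inequality, `ε ^ r * P(|Y n - V| ≥ ε) ≤ E |Y n - V| ^ r`, so every index counted in the
in-probability condition for `(ε, δ)` is counted in the `r`-th mean condition for `δ * ε ^ r`.
Density zero passes to subfamilies, which gives the claim.
-/

open MeasureTheory Filter

/-- Deferred Nörlund statistical `r`-th mean convergence of `(Y n)` to `Z`. -/
def StDNM {Ω : Type*} [MeasurableSpace Ω] (μ : Measure Ω)
    (x y : ℕ → ℕ) (e g : ℕ → ℝ) (Y : ℕ → Ω → ℝ) (Z : Ω → ℝ) (r : ℝ) : Prop :=
  ∀ ε > (0 : ℝ),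
    DNZero x y e g
      (fun m n => ε ≤ e (y m - n) * g n * ∫ ω, |Y n ω - Z ω| ^ r ∂μ)

lemma rpow_mul_measure_le_integral_abs_rpow {Ω : Type*} [MeasurableSpace Ω] (μ : Measure Ω)
    {X : Ω → ℝ} {ε r : ℝ} (hε : 0 ≤ ε) (hr : 0 < r)
    (hX : Integrable (fun ω => |X ω| ^ r) μ) :
    ε ^ r * (μ {ω | ε ≤ |X ω|}).toReal ≤ ∫ ω, |X ω| ^ r ∂μ := by
  have hset : {ω | ε ≤ |X ω|} = {ω | ε ^ r ≤ |X ω| ^ r} := by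
    ext ω
    simp only [Set.mem_ofPred_eq, Real.rpow_le_rpow_iff hε (abs_nonneg _) hr]
  rw [hset]
  exact mul_meas_ge_le_integral_of_nonneg
    (Eventually.of_forall fun ω => Real.rpow_nonneg (abs_nonneg _) r) hX _

lemma le_mul_integral_abs_rpow_of_le_mul_measure {Ω : Type*} [MeasurableSpace Ω]
    (μ : Measure Ω) {X : Ω → ℝ} {w δ ε r : ℝ} (hδ : 0 < δ) (hε : 0 < ε) (hr : 0 < r)
    (hX : Integrable (fun ω => |X ω| ^ r) μ) (h : δ ≤ w * (μ {ω | ε ≤ |X ω|}).toReal) :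
    δ * ε ^ r ≤ w * ∫ ω, |X ω| ^ r ∂μ := by
  have hw : 0 < w := pos_of_mul_pos_left (hδ.trans_le h) ENNReal.toReal_nonneg
  calc δ * ε ^ r ≤ w * (μ {ω | ε ≤ |X ω|}).toReal * ε ^ r := by gcongr
    _ = w * (ε ^ r * (μ {ω | ε ≤ |X ω|}).toReal) := by ring
    _ ≤ w * ∫ ω, |X ω| ^ r ∂μ := by
        gcongr; exact rpow_mul_measure_le_integral_abs_rpow μ hε.le hr hX

lemma setOf_natCast_le_and_eq_empty_s7 {R : ℝ} (hR : R < 0) (P : ℕ → Prop) :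
    {n : ℕ | (n : ℝ) ≤ R ∧ P n} = ∅ :=
  Set.eq_empty_of_forall_notMem fun n hn => (hn.1.trans_lt hR).not_ge n.cast_nonneg

lemma natCard_setOf_natCast_le_and_div_nonneg (R : ℝ) (P : ℕ → Prop) :
    0 ≤ (Nat.card {n : ℕ | (n : ℝ) ≤ R ∧ P n} : ℝ) / R := by
  rcases le_or_gt 0 R with hR | hR
  · positivity
  · simp [setOf_natCast_le_and_eq_empty_s7 hR]

lemma natCard_setOf_natCast_le_and_div_mono (R : ℝ) {P Q : ℕ → Prop} (hPQ : ∀ n, P n → Q n) :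
    (Nat.card {n : ℕ | (n : ℝ) ≤ R ∧ P n} : ℝ) / R ≤
      (Nat.card {n : ℕ | (n : ℝ) ≤ R ∧ Q n} : ℝ) / R := by
  rcases le_or_gt 0 R with hR | hR
  · have hfin : {n : ℕ | (n : ℝ) ≤ R ∧ Q n}.Finite :=
      (Set.finite_Iic ⌊R⌋₊).subset fun n hn => Nat.le_floor hn.1
    gcongr
    exact Nat.card_mono hfin fun n hn => ⟨hn.1, hPQ n hn.2⟩
  · simp [setOf_natCast_le_and_eq_empty_s7 hR]

lemma DNZero.mono_s7 {x y : ℕ → ℕ} {e g : ℕ → ℝ} {A B : ℕ → ℕ → Prop}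
    (hB : DNZero x y e g B) (hAB : ∀ m n, A m n → B m n) : DNZero x y e g A :=
  squeeze_zero (fun _ => natCard_setOf_natCast_le_and_div_nonneg _ _)
    (fun m => natCard_setOf_natCast_le_and_div_mono _ (hAB m)) hB

theorem stmt_7_general {Ω : Type*} [MeasurableSpace Ω] (μ : Measure Ω)
    (x y : ℕ → ℕ) (e g : ℕ → ℝ)
    (r : ℝ) (hr : 1 ≤ r)
    (Y : ℕ → Ω → ℝ) (V : Ω → ℝ)
    (hInt : ∀ n, Integrable (fun ω => |Y n ω - V ω| ^ r) μ)
    (hM : StDNM μ x y e g Y V r) :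
    StDNP μ x y e g Y V := by
  intro ε hε δ hδ
  have hr₀ : 0 < r := by linarith
  exact (hM (δ * ε ^ r) (by positivity)).mono_s7 fun m n =>
    le_mul_integral_abs_rpow_of_le_mul_measure μ hδ hε hr₀ (hInt n)

/-- For `r ≥ 1`, deferred Nörlund statistical `r`-th mean convergence
implies deferred Nörlund statistical convergence in probability. -/
theorem stmt_7 {Ω : Type*} [MeasurableSpace Ω] (μ : Measure Ω) [IsProbabilityMeasure μ]
    (x y : ℕ → ℕ) (e g : ℕ → ℝ)
    (hxy : ∀ m, x m < y m) (hy : Tendsto y atTop atTop)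
    (he : ∀ m, 0 ≤ e m) (hg : ∀ m, 0 ≤ g m)
    (hR : ∀ m, 0 < Rm x y e g m)
    (r : ℝ) (hr : 1 ≤ r)
    (Y : ℕ → Ω → ℝ) (V : Ω → ℝ)
    (hYmeas : ∀ n, Measurable (Y n)) (hVmeas : Measurable V)
    (hInt : ∀ n, Integrable (fun ω => |Y n ω - V ω| ^ r) μ)
    (hM : StDNM μ x y e g Y V r) :
    StDNP μ x y e g Y V :=
  stmt_7_general μ x y e g r hr Y V hInt hM
end
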